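/- There are no minimal Weihrauch degrees: for every problem f with nonempty domain, there exists a problem g with nonempty domain such that g <_W f. (Equivalently, no problem is a minimal cover of the nowhere-defined problem, which is the bottom of the Weihrauch degrees.) -/

import Mathlib

namespace WeihrauchPaper

/-- Baire space ℕ^ℕ. -/
abbrev Baire : Type := ℕ → ℕ

/-- Prepend a natural number to an element of Baire space: `(cons e q) 0 = e`, `(cons e q) (n+1) = q n`. -/
def cons (e : ℕ) (q : Baire) : Baire
  | 0 => e
  | n + 1 => q n

/-- Pairing of two elements of Baire space by interleaving. -/
def pair (p q : Baire) : Baire := fun n => if n % 2 = 0 then p (n / 2) else q (n / 2)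

def left (x : Baire) : Baire := fun n => x (2 * n)
def right (x : Baire) : Baire := fun n => x (2 * n + 1)

/-- The finite initial segment of `p` of length `k`. -/
def pref (p : Baire) (k : ℕ) : List ℕ := List.ofFn fun i : Fin k => p i

/-- Result of running the `e`-th partial computable function on the pair
(code of the length-`k` prefix of `p`, input `n`). -/
def query (e : ℕ) (p : Baire) (k n : ℕ) : Part ℕ :=
  Nat.Partrec.Code.eval (Denumerable.ofNat Nat.Partrec.Code e)
    (Nat.pair (Encodable.encode (pref p k)) n)

/-- `FEval e p q` : the `e`-th partial computable functional on Baire space, applied to `p`,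
is defined and equals `q`.  The value at `n` is obtained from the least prefix length `k`
on which the computation converges, which makes the functional single-valued. -/
def FEval (e : ℕ) (p q : Baire) : Prop :=
  ∀ n, ∃ k, query e p k n = Part.some (q n) ∧ ∀ k' < k, ¬ (query e p k' n).Dom

/-- Turing reducibility on Baire space: `q ≤_T p` iff `q = Φ_e(p)` for some `e`. -/
def TuringLE (q p : Baire) : Prop := ∃ e, FEval e p q

/-- Medvedev reducibility: `A ≤_M B` iff some partial computable functional is defined on all
of `B` and maps `B` into `A`. -/
def MedLE (A B : Set Baire) : Prop := ∃ e, ∀ q ∈ B, ∃ p, FEval e q p ∧ p ∈ A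

def MedEquiv (A B : Set Baire) : Prop := MedLE A B ∧ MedLE B A

def MedLT (A B : Set Baire) : Prop := MedLE A B ∧ ¬ MedLE B A

/-- The meet `P ∧ Q := 0⌢P ∪ 1⌢Q` in the Medvedev degrees. -/
def medMeet (P Q : Set Baire) : Set Baire := (cons 0 '' P) ∪ (cons 1 '' Q)

/-- `Succ p = { e⌢q : Φ_e(q) = p and q ≰_T p }`. -/
def Succ (p : Baire) : Set Baire :=
  {x | ∃ e q, x = cons e q ∧ FEval e q p ∧ ¬ TuringLE q p}

/-- A problem (partial multi-valued function on Baire space), represented as the map sending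
an instance to its (possibly empty) set of solutions. -/
abbrev Problem : Type := Baire → Set Baire

/-- The domain of a problem: the instances having at least one solution. -/
def dom (f : Problem) : Set Baire := {x | (f x).Nonempty}

/-- Weihrauch reducibility `f ≤_W g`. -/
def WLE (f g : Problem) : Prop :=
  ∃ eΦ eΨ, ∀ p ∈ dom f, ∃ p', FEval eΦ p p' ∧ p' ∈ dom g ∧
    ∀ q ∈ g p', ∃ r, FEval eΨ (pair p q) r ∧ r ∈ f p

def WEquiv (f g : Problem) : Prop := WLE f g ∧ WLE g f

def WLT (f g : Problem) : Prop := WLE f g ∧ ¬ WLE g f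

/-- The identity on Baire space, as a problem. -/
def idB : Problem := fun p => {p}

/-- The restriction of the identity to `X ⊆ ℕ^ℕ`, as a problem. -/
def idRestrict (X : Set Baire) : Problem := fun p => {q | p ∈ X ∧ q = p}

/-- The join `f ⊔ g`, with domain `{0}×dom f ∪ {1}×dom g` (coded via `cons`). -/
def join (f g : Problem) : Problem := fun x =>
  if x 0 = 0 then f (fun n => x (n + 1))
  else if x 0 = 1 then g (fun n => x (n + 1))
  else ∅

/-- The meet `f ⊓ g`, with domain `dom f × dom g` (coded via `pair`) and
`(f ⊓ g)(x,z) = {0}×f(x) ∪ {1}×g(z)` (coded via `cons`). -/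
def meet (f g : Problem) : Problem := fun x =>
  {y | left x ∈ dom f ∧ right x ∈ dom g ∧
    ((∃ z ∈ f (left x), y = cons 0 z) ∨ (∃ z ∈ g (right x), y = cons 1 z))}

/-- The constant sequence with value `n`. -/
def const (n : ℕ) : Baire := fun _ => n

/-- The characteristic function of `D ⊆ ℕ` as a problem: defined on the constant sequences,
with `χ_D(n)` the constantly-1 sequence if `n ∈ D` and the constantly-0 sequence otherwise. -/
def chi (D : Set ℕ) : Problem := fun x =>
  {y | ∃ n, x = const n ∧ ((n ∈ D ∧ y = const 1) ∨ (n ∉ D ∧ y = const 0))}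

/-- The set of non-computable elements of Baire space. -/
def NR : Set Baire := {q | ¬ Computable q}

/-- `f` is a minimal cover of `h` in the Weihrauch degrees. -/
def MinimalCover (f h : Problem) : Prop :=
  WLT h f ∧ ¬ ∃ g, WLT h g ∧ WLT g f

/-- `f` is a strong minimal cover of `h` in the Weihrauch degrees. -/
def StrongMinimalCover (f h : Problem) : Prop :=
  WLT h f ∧ ∀ g, WLT g f → WLE g h



/-! ### Auxiliary lemmas -/

open Nat.Partrec (Code)
open Nat.Partrec.Code (eval exists_code)

lemma pref_getElem? (p : Baire) (k i : ℕ) :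
    (pref p k)[i]? = if h : i < k then some (p i) else none := by
  simp [pref, List.getElem?_ofFn, List.ofFnNthVal]

private lemma unp1 : Computable fun m : ℕ => m.unpair.1 :=
  Computable.fst.comp Primrec.unpair.to_comp

private lemma unp2 : Computable fun m : ℕ => m.unpair.2 :=
  Computable.snd.comp Primrec.unpair.to_comp

/-- A code for the total functional `p ↦ fun n => (v n).getD (p (u n))`. -/
lemma exists_code_getD (u : ℕ → ℕ) (v : ℕ → Option ℕ) (hu : Computable u) (hv : Computable v) :
    ∃ e, ∀ p : Baire, FEval e p (fun n => (v n).getD (p (u n))) := by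
  classical
  set F : ℕ → Option ℕ := fun m =>
    Option.casesOn (v m.unpair.2)
      ((Encodable.decode (α := List ℕ) m.unpair.1).bind fun L => L[u m.unpair.2]?)
      Option.some with hF
  have hbind : Computable fun m : ℕ =>
      (Encodable.decode (α := List ℕ) m.unpair.1).bind fun L => L[u m.unpair.2]? :=
    Computable.option_bind (Computable.decode.comp unp1)
      (Primrec.list_getElem?.to_comp.comp Computable.snd (hu.comp (unp2.comp Computable.fst)))
  have hFc : Computable F :=
    Computable.option_casesOn (hv.comp unp2) hbind
      (Computable.option_some.comp Computable.snd)
  have hP : Nat.Partrec fun m => (F m : Part ℕ) := Partrec.nat_iff.1 hFc.ofOption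
  obtain ⟨cd, hcd⟩ := exists_code.1 hP
  refine ⟨Encodable.encode cd, fun p n => ?_⟩
  have hq : ∀ k, query (Encodable.encode cd) p k n
      = (F (Nat.pair (Encodable.encode (pref p k)) n) : Part ℕ) := by
    intro k
    simp [query, Denumerable.ofNat_encode, hcd]
  have hFval : ∀ k, F (Nat.pair (Encodable.encode (pref p k)) n)
      = Option.casesOn (v n) ((pref p k)[u n]?) Option.some := by
    intro k
    simp [hF, Nat.unpair_pair, Encodable.encodek]
  cases hvn : v n with
  | some a =>
    refine ⟨0, ?_, by omega⟩
    rw [hq, hFval, hvn]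
    simp [hvn]
  | none =>
    refine ⟨u n + 1, ?_, ?_⟩
    · rw [hq, hFval, hvn]
      have : (pref p (u n + 1))[u n]? = some (p (u n)) := by
        rw [pref_getElem?, dif_pos (by omega)]
      rw [this]
      simp [hvn]
    · intro k' hk'
      rw [hq, hFval, hvn]
      have : (pref p k')[u n]? = none := by
        rw [pref_getElem?, dif_neg (by omega)]
      rw [this]
      simp [Part.coe_none]

/-- Composing a coded functional with a computable index transformation. -/
lemma exists_code_comp (e : ℕ) (u : ℕ → ℕ) (hu : Computable u) :
    ∃ e', ∀ p q : Baire, FEval e p q → FEval e' p (fun n => q (u n)) := by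
  have hc : Nat.Partrec (eval (Denumerable.ofNat Code e)) := exists_code.2 ⟨_, rfl⟩
  have hg : Computable fun m : ℕ => Nat.pair (Nat.unpair m).1 (u (Nat.unpair m).2) :=
    Primrec₂.natPair.to_comp.comp unp1 (hu.comp unp2)
  have hcomp : Partrec fun m =>
      eval (Denumerable.ofNat Code e) (Nat.pair (Nat.unpair m).1 (u (Nat.unpair m).2)) :=
    (Partrec.nat_iff.2 hc).comp hg
  obtain ⟨cd, hcd⟩ := exists_code.1 (Partrec.nat_iff.1 hcomp)
  refine ⟨Encodable.encode cd, fun p q hpq n => ?_⟩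
  have key : ∀ k, query (Encodable.encode cd) p k n = query e p k (u n) := by
    intro k
    simp [query, Denumerable.ofNat_encode, hcd, Nat.unpair_pair]
  obtain ⟨k, hk1, hk2⟩ := hpq (u n)
  exact ⟨k, by rw [key]; exact hk1, fun k' h => by rw [key]; exact hk2 k' h⟩

/-- `FEval e p` is single-valued. -/
lemma FEval_unique {e : ℕ} {p q q' : Baire} (h : FEval e p q) (h' : FEval e p q') : q = q' := by
  funext n
  obtain ⟨k, hk1, hk2⟩ := h n
  obtain ⟨k', hk1', hk2'⟩ := h' n
  have hkk : k = k' := by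
    rcases lt_trichotomy k k' with hlt | heq | hgt
    · exact absurd (by rw [hk1]; exact trivial) (hk2' k hlt)
    · exact heq
    · exact absurd (by rw [hk1']; exact trivial) (hk2 k' hgt)
  subst hkk
  have := hk1.symm.trans hk1'
  exact Part.some_injective this

/-- The Turing lower cone of any point is countable. -/
lemma countable_turing (p : Baire) : {q : Baire | TuringLE q p}.Countable := by
  have : {q : Baire | TuringLE q p} ⊆ ⋃ e : ℕ, {q : Baire | FEval e p q} := by
    rintro q ⟨e, he⟩
    exact Set.mem_iUnion.2 ⟨e, he⟩
  refine Set.Countable.mono this (Set.countable_iUnion fun e => ?_)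
  exact Set.Subsingleton.countable fun a ha b hb => FEval_unique ha hb

/-- There is a point not Turing-below `p`. -/
lemma exists_not_turingLE (p : Baire) : ∃ x : Baire, ¬ TuringLE x p := by
  by_contra hcon
  push_neg at hcon
  obtain ⟨F, hFsub⟩ := Set.countable_iff_exists_subset_range.1 (countable_turing p)
  set x : Baire := fun n => F n n + 1 with hx
  obtain ⟨m, hm⟩ := hFsub (hcon x)
  have : F m m = F m m + 1 := by conv_lhs => rw [hm]
  omega

lemma left_pair (p q : Baire) : left (pair p q) = p := by
  funext n
  simp [left, pair, Nat.mul_div_cancel_left n (by norm_num : (0:ℕ) < 2)]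

lemma right_pair (p q : Baire) : right (pair p q) = q := by
  funext n
  have h1 : (2 * n + 1) % 2 = 1 := by omega
  have h2 : (2 * n + 1) / 2 = n := by omega
  simp [right, pair, h1, h2]

/-- A code for the functional `left`. -/
lemma exists_code_left : ∃ e, ∀ p : Baire, FEval e p (left p) := by
  obtain ⟨e, he⟩ := exists_code_getD (fun n => 2 * n) (fun _ => Option.none)
    (Primrec.nat_double.to_comp) (Computable.const _)
  refine ⟨e, fun p => ?_⟩
  have : (fun n => (Option.none.getD (p (2 * n)))) = left p := by
    funext n; rfl
  rw [← this]
  exact he p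

/-- A code for the functional `y ↦ cons 0 (right y)`. -/
lemma exists_code_cons_right : ∃ e, ∀ p : Baire, FEval e p (cons 0 (right p)) := by
  obtain ⟨e, he⟩ := exists_code_getD (fun n => 2 * n - 1)
    (fun n => if n = 0 then Option.some 0 else Option.none)
    ((Primrec.nat_sub.comp (Primrec.nat_double) (Primrec.const 1)).to_comp)
    ((Primrec.ite (Primrec.eq.comp Primrec.id (Primrec.const 0))
      (Primrec.const (Option.some 0)) (Primrec.const Option.none)).to_comp)
  refine ⟨e, fun p => ?_⟩
  have : (fun n => ((if n = 0 then Option.some 0 else Option.none).getD (p (2 * n - 1))))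
      = cons 0 (right p) := by
    funext n
    cases n with
    | zero => rfl
    | succ m =>
      have h2 : 2 * (m + 1) - 1 = 2 * m + 1 := by omega
      simp [cons, right, h2]
  rw [← this]
  exact he p

/-- There are no minimal Weihrauch degrees. -/
theorem no_minimal_weihrauch_degrees (f : Problem) (hf : (dom f).Nonempty) :
    ∃ g : Problem, (dom g).Nonempty ∧ WLT g f := by
  obtain ⟨p1, hp1⟩ := hf
  obtain ⟨x, hx⟩ := exists_not_turingLE p1
  set h : Problem := idRestrict {x} with hh
  refine ⟨meet f h, ?_, ?_, ?_⟩
  · -- nonempty domain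
    obtain ⟨q1, hq1⟩ := hp1
    refine ⟨pair p1 x, cons 0 q1, ?_⟩
    refine ⟨by rw [left_pair]; exact ⟨q1, hq1⟩, ?_, ?_⟩
    · rw [right_pair]
      exact ⟨x, rfl, rfl⟩
    · left
      exact ⟨q1, by rw [left_pair]; exact hq1, rfl⟩
  · -- meet f h ≤_W f
    obtain ⟨eΦ, heΦ⟩ := exists_code_left
    obtain ⟨eΨ, heΨ⟩ := exists_code_cons_right
    refine ⟨eΦ, eΨ, fun p hp => ?_⟩
    obtain ⟨y, hyf, hyh, _⟩ := hp
    refine ⟨left p, heΦ p, hyf, fun q hq => ?_⟩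
    refine ⟨cons 0 (right (pair p q)), heΨ (pair p q), ?_⟩
    rw [right_pair]
    exact ⟨hyf, hyh, Or.inl ⟨q, hq, rfl⟩⟩
  · -- ¬ f ≤_W meet f h
    rintro ⟨eΦ, eΨ, hred⟩
    obtain ⟨p', hΦ, hp'dom, -⟩ := hred p1 hp1
    obtain ⟨y, -, hyh, -⟩ := hp'dom
    obtain ⟨z, hzx, -⟩ := hyh
    have hrx : right p' = x := hzx
    obtain ⟨e', he'⟩ := exists_code_comp eΦ (fun n => 2 * n + 1)
      ((Primrec.succ.comp Primrec.nat_double).to_comp)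
    have : FEval e' p1 (fun n => p' (2 * n + 1)) := he' p1 p' hΦ
    have hxle : TuringLE x p1 := by
      refine ⟨e', ?_⟩
      have hxeq : x = fun n => p' (2 * n + 1) := by
        rw [← hrx]; rfl
      rw [hxeq]
      exact this
    exact hx hxle

end WeihrauchPaper
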